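/- arXiv:2403.18798 — 3 statements merged into one kernel-verified Lean document; each statement's English description precedes it below -/
import Mathlib

section
/- Suppose P_α →_w P on (F, τ_uF) and (P_α) is asymptotically compact-bounded, i.e., for every ε > 0 there is a compact K with liminf_α P_α({F : F ⊆ K}) ≥ 1 − ε. Then limsup_α P_α(⋂_{F ∈ F*} H(F)) ≤ P(⋂_{F ∈ F*} H(F)) for every collection F* of closed subsets of E. Conversely, if P is compact-bounded (for each ε > 0 there is compact K with P({F : F ⊆ K}) ≥ 1 − ε) and the displayed inequality holds for all collections F* of closed sets, then P_α →_w P on (F, τ_uF) and (P_α) is asymptotically compact-bounded. -/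
open TopologicalSpace MeasureTheory Filter Set
open scoped ENNReal

/-- The hitting set `H(A)` of a subset `A ⊆ E`: all closed sets meeting `A`. -/
def hitting {E : Type*} [TopologicalSpace E] (A : Set E) : Set (Closeds E) :=
  {F | ((F : Set E) ∩ A).Nonempty}

/-- The missing set `M(A)` of a subset `A ⊆ E`: all closed sets disjoint from `A`. -/
def missing {E : Type*} [TopologicalSpace E] (A : Set E) : Set (Closeds E) :=
  {F | (F : Set E) ∩ A = ∅}

/-- The upper Fell topology on the hyperspace of closed sets. -/
def upperFell (E : Type*) [TopologicalSpace E] : TopologicalSpace (Closeds E) :=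
  generateFrom {U | ∃ K : Set E, IsCompact K ∧ U = missing K}

/-- The Fell topology on the hyperspace of closed sets. -/
def fell (E : Type*) [TopologicalSpace E] : TopologicalSpace (Closeds E) :=
  generateFrom ({U | ∃ K : Set E, IsCompact K ∧ U = missing K} ∪
    {U | ∃ G : Set E, IsOpen G ∧ U = hitting G})

/-- The Borel σ-algebra of the Fell topology (it coincides with that of the
upper Fell topology). -/
def borelFell (E : Type*) [TopologicalSpace E] : MeasurableSpace (Closeds E) :=
  @borel (Closeds E) (fell E)

/-- Weak convergence of a net of (probability) measures with respect to a
topology `t` on the hyperspace: limsup over every `t`-closed set is dominated. -/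
def WeakConvTo {E : Type*} [TopologicalSpace E] {ι : Type*} (l : Filter ι)
    (t : TopologicalSpace (Closeds E))
    (P : ι → @Measure (Closeds E) (borelFell E))
    (Q : @Measure (Closeds E) (borelFell E)) : Prop :=
  ∀ C : Set (Closeds E), @IsClosed _ t C → l.limsup (fun i => P i C) ≤ Q C

/-! Asymptotic compact-boundedness lets one replace each closed `F ∈ 𝒻` by the compact set
`F ∩ K`: `⋂ H(F) ⊆ ⋂ H(F ∩ K) ∪ {G | G ⊄ K}`, where the first set is closed in the upper Fell
topology and the second has asymptotic mass at most `ε`. Conversely, every upper Fell closed set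
is an intersection of hitting sets `H(K)` of compact sets `K`, which gives weak convergence;
applying the inequality to `H((interior K')ᶜ)`, for a compact neighbourhood `K'` of a compact set
carrying mass `1 - ε` under `Q`, gives asymptotic compact-boundedness. -/

open Topology

theorem ENNReal.limsup_add_le_add {ι : Type*} (l : Filter ι) (u v : ι → ℝ≥0∞) :
    l.limsup (u + v) ≤ l.limsup u + l.limsup v := by
  refine ENNReal.le_of_forall_pos_le_add fun ε hε hfin => ?_
  have hε2 : (ε / 2 : ℝ≥0∞) ≠ 0 := by simpa using hε.ne'
  have hu : ∀ᶠ i in l, u i < l.limsup u + ε / 2 :=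
    eventually_lt_of_limsup_lt (ENNReal.lt_add_right (ENNReal.add_lt_top.1 hfin).1.ne hε2)
  have hv : ∀ᶠ i in l, v i < l.limsup v + ε / 2 :=
    eventually_lt_of_limsup_lt (ENNReal.lt_add_right (ENNReal.add_lt_top.1 hfin).2.ne hε2)
  refine limsup_le_of_le (by isBoundedDefault) ?_
  filter_upwards [hu, hv] with i hui hvi
  calc u i + v i ≤ (l.limsup u + ε / 2) + (l.limsup v + ε / 2) := add_le_add hui.le hvi.le
    _ = l.limsup u + l.limsup v + ε := by rw [add_add_add_comm, ENNReal.add_halves]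

section ProbabilityCompl

variable {Ω ι : Type*} {mΩ : MeasurableSpace Ω} (l : Filter ι) (μ : ι → Measure Ω)
  [∀ i, IsProbabilityMeasure (μ i)] {s : Set Ω}

theorem limsup_measure_compl_eq_one_sub_liminf (hs : MeasurableSet s) :
    l.limsup (fun i => μ i sᶜ) = 1 - l.liminf (fun i => μ i s) := by
  simp_rw [prob_compl_eq_one_sub hs]
  exact ENNReal.limsup_const_sub _ _ ENNReal.one_ne_top

theorem liminf_measure_eq_one_sub_limsup_compl [l.NeBot] (hs : MeasurableSet s) :
    l.liminf (fun i => μ i s) = 1 - l.limsup (fun i => μ i sᶜ) := by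
  rw [← ENNReal.liminf_const_sub _ _ ENNReal.one_ne_top]
  simp_rw [prob_compl_eq_one_sub hs, ENNReal.sub_sub_cancel ENNReal.one_ne_top prob_le_one]

end ProbabilityCompl

section Hyperspace

variable {E : Type*} [TopologicalSpace E]

theorem compl_hitting (A : Set E) : (hitting A)ᶜ = missing A := by
  ext F
  simp [_root_.hitting, missing, not_nonempty_iff_eq_empty]

theorem missing_union (A B : Set E) : missing (A ∪ B) = missing A ∩ missing B := by
  ext F
  simp [missing, inter_union_distrib_left]

theorem missing_empty : missing (∅ : Set E) = univ := by
  ext F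
  simp [missing]

theorem isTopologicalBasis_upperFell :
    @IsTopologicalBasis (Closeds E) (upperFell E)
      {U | ∃ K : Set E, IsCompact K ∧ U = missing K} := by
  let _ := upperFell E
  refine .mk ?_ ?_ rfl
  · rintro _ ⟨K₁, hK₁, rfl⟩ _ ⟨K₂, hK₂, rfl⟩ F hF
    exact ⟨_, ⟨K₁ ∪ K₂, hK₁.union hK₂, rfl⟩, by rwa [missing_union],
      (missing_union K₁ K₂).le⟩
  · exact sUnion_eq_univ_iff.2 fun F =>
      ⟨_, ⟨∅, isCompact_empty, rfl⟩, by rw [missing_empty]; trivial⟩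

theorem isClosed_upperFell_hitting {K : Set E} (hK : IsCompact K) :
    IsClosed[upperFell E] (hitting K) := by
  let _ := upperFell E
  rw [← isOpen_compl_iff, compl_hitting]
  exact isOpen_generateFrom_of_mem ⟨K, hK, rfl⟩

theorem eq_iInter_hitting_of_isClosed_upperFell {C : Set (Closeds E)}
    (hC : IsClosed[upperFell E] C) :
    C = ⋂ K ∈ {K : Set E | IsCompact K ∧ C ⊆ hitting K}, hitting K := by
  let _ := upperFell E
  refine (subset_iInter₂ fun K hK => hK.2).antisymm fun F hF => by_contra fun hFC => ?_
  obtain ⟨_, ⟨K, hK, rfl⟩, hFK, hKC⟩ :=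
    isTopologicalBasis_upperFell.exists_subset_of_mem_open hFC hC.isOpen_compl
  have hCK : C ⊆ hitting K := by
    rw [← compl_compl (hitting K), compl_hitting]
    exact subset_compl_comm.1 hKC
  rw [← compl_hitting] at hFK
  exact hFK (mem_iInter₂.1 hF K ⟨hK, hCK⟩)

theorem measurableSet_setOf_subset {K : Set E} (hK : IsClosed K) :
    MeasurableSet[borelFell E] {F : Closeds E | (F : Set E) ⊆ K} := by
  have hopen : IsOpen[fell E] (hitting Kᶜ) :=
    isOpen_generateFrom_of_mem (Or.inr ⟨Kᶜ, hK.isOpen_compl, rfl⟩)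
  have hset : {F : Closeds E | (F : Set E) ⊆ K} = (hitting Kᶜ)ᶜ := by
    ext F
    simp [_root_.hitting, inter_compl_nonempty_iff]
  rw [hset]
  exact (MeasurableSpace.measurableSet_generateFrom hopen).compl

end Hyperspace

section WeakConvergence

variable {E ι : Type*} [TopologicalSpace E] {l : Filter ι}
  {P : ι → @Measure (Closeds E) (borelFell E)} {Q : @Measure (Closeds E) (borelFell E)}

def IsCompactBounded (Q : @Measure (Closeds E) (borelFell E)) : Prop :=
  ∀ ε : ℝ≥0∞, 0 < ε → ∃ K : Set E, IsCompact K ∧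
    1 - ε ≤ Q {F : Closeds E | (F : Set E) ⊆ K}

def IsAsymptoticallyCompactBounded (l : Filter ι)
    (P : ι → @Measure (Closeds E) (borelFell E)) : Prop :=
  ∀ ε : ℝ≥0∞, 0 < ε → ∃ K : Set E, IsCompact K ∧
    1 - ε ≤ l.liminf (fun i => P i {F : Closeds E | (F : Set E) ⊆ K})

theorem limsup_measure_iInter_hitting_le [T2Space E] [∀ i, IsProbabilityMeasure (P i)]
    (hPQ : WeakConvTo l (upperFell E) P Q) (hP : IsAsymptoticallyCompactBounded l P)
    {𝒻 : Set (Set E)} (h𝒻 : ∀ F ∈ 𝒻, IsClosed F) :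
    l.limsup (fun i => P i (⋂ F ∈ 𝒻, hitting F)) ≤ Q (⋂ F ∈ 𝒻, hitting F) := by
  refine ENNReal.le_of_forall_pos_le_add fun ε hε _ => ?_
  obtain ⟨K, hK, hPK⟩ := hP ε (by exact_mod_cast hε)
  set A := ⋂ F ∈ 𝒻, hitting F
  set B := {F : Closeds E | (F : Set E) ⊆ K}
  set C := ⋂ F ∈ 𝒻, hitting (F ∩ K)
  have hC : IsClosed[upperFell E] C := by
    let _ := upperFell E
    exact isClosed_biInter fun F hF => isClosed_upperFell_hitting (hK.inter_left (h𝒻 F hF))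
  have hAC : A ⊆ C ∪ Bᶜ := by
    intro G hG
    by_cases hGK : (G : Set E) ⊆ K
    · refine .inl (mem_iInter₂.2 fun F hF => ?_)
      obtain ⟨x, hxG, hxF⟩ := mem_iInter₂.1 hG F hF
      exact ⟨x, hxG, hxF, hGK hxG⟩
    · exact .inr hGK
  have hCA : C ⊆ A := iInter₂_mono fun F _ => fun G ⟨x, hxG, hxF, _⟩ => ⟨x, hxG, hxF⟩
  have hBc : l.limsup (fun i => P i Bᶜ) ≤ ε := by
    rw [limsup_measure_compl_eq_one_sub_liminf l P (measurableSet_setOf_subset hK.isClosed)]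
    exact (tsub_le_tsub_left hPK 1).trans tsub_tsub_le
  calc l.limsup (fun i => P i A)
      ≤ l.limsup ((fun i => P i C) + fun i => P i Bᶜ) :=
        limsup_le_limsup (.of_forall fun i => (measure_mono hAC).trans (measure_union_le _ _))
    _ ≤ l.limsup (fun i => P i C) + l.limsup (fun i => P i Bᶜ) :=
        ENNReal.limsup_add_le_add _ _ _
    _ ≤ Q A + ε := add_le_add ((hPQ C hC).trans (measure_mono hCA)) hBc

theorem weakConvTo_upperFell_of_limsup_iInter_hitting_le [T2Space E]
    (h : ∀ 𝒻 : Set (Set E), (∀ F ∈ 𝒻, IsClosed F) →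
      l.limsup (fun i => P i (⋂ F ∈ 𝒻, hitting F)) ≤ Q (⋂ F ∈ 𝒻, hitting F)) :
    WeakConvTo l (upperFell E) P Q := by
  intro C hC
  rw [eq_iInter_hitting_of_isClosed_upperFell hC]
  exact h _ fun K hK => hK.1.isClosed

theorem isAsymptoticallyCompactBounded_of_limsup_hitting_le [T2Space E]
    [WeaklyLocallyCompactSpace E] [l.NeBot] [∀ i, IsProbabilityMeasure (P i)]
    [IsProbabilityMeasure Q] (hQ : IsCompactBounded Q)
    (h : ∀ D : Set E, IsClosed D → l.limsup (fun i => P i (hitting D)) ≤ Q (hitting D)) :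
    IsAsymptoticallyCompactBounded l P := by
  intro ε hε
  obtain ⟨K, hK, hQK⟩ := hQ ε hε
  obtain ⟨K', hK', hKK'⟩ := exists_compact_superset hK
  refine ⟨K', hK', ?_⟩
  set D := (interior K')ᶜ
  have hDK : hitting D ⊆ {F : Closeds E | (F : Set E) ⊆ K}ᶜ :=
    fun G ⟨x, hxG, hxD⟩ hGK => hxD (hKK' (hGK hxG))
  have hK'D : {F : Closeds E | (F : Set E) ⊆ K'}ᶜ ⊆ hitting D := fun G hG =>
    let ⟨x, hxG, hxK'⟩ := not_subset.1 hG
    ⟨x, hxG, fun hx => hxK' (interior_subset hx)⟩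
  have hQD : Q (hitting D) ≤ ε :=
    calc Q (hitting D) ≤ 1 - Q {F : Closeds E | (F : Set E) ⊆ K} := by
          rw [← prob_compl_eq_one_sub (measurableSet_setOf_subset hK.isClosed)]
          exact measure_mono hDK
      _ ≤ ε := (tsub_le_tsub_left hQK 1).trans tsub_tsub_le
  have hPK' : l.limsup (fun i => P i {F : Closeds E | (F : Set E) ⊆ K'}ᶜ) ≤ ε :=
    ((limsup_le_limsup (.of_forall fun i => measure_mono hK'D)).trans
      (h D isOpen_interior.isClosed_compl)).trans hQD
  rw [liminf_measure_eq_one_sub_limsup_compl l P (measurableSet_setOf_subset hK'.isClosed)]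
  exact tsub_le_tsub_left hPK' 1

end WeakConvergence

theorem stmt_2_general {E : Type*} [TopologicalSpace E] [LocallyCompactSpace E]
    [T2Space E] {ι : Type*} (l : Filter ι) [l.NeBot]
    (P : ι → @Measure (Closeds E) (borelFell E)) (Q : @Measure (Closeds E) (borelFell E))
    (hP : ∀ i, IsProbabilityMeasure (P i)) (hQ : IsProbabilityMeasure Q) :
    ((WeakConvTo l (upperFell E) P Q ∧
        (∀ ε : ℝ≥0∞, 0 < ε → ∃ K : Set E, IsCompact K ∧
          1 - ε ≤ l.liminf (fun i => P i {F : Closeds E | (F : Set E) ⊆ K}))) →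
      ∀ 𝒻 : Set (Set E), (∀ F ∈ 𝒻, IsClosed F) →
        l.limsup (fun i => P i (⋂ F ∈ 𝒻, hitting F)) ≤ Q (⋂ F ∈ 𝒻, hitting F)) ∧
    (((∀ ε : ℝ≥0∞, 0 < ε → ∃ K : Set E, IsCompact K ∧
          1 - ε ≤ Q {F : Closeds E | (F : Set E) ⊆ K}) ∧
        (∀ 𝒻 : Set (Set E), (∀ F ∈ 𝒻, IsClosed F) →
          l.limsup (fun i => P i (⋂ F ∈ 𝒻, hitting F)) ≤ Q (⋂ F ∈ 𝒻, hitting F))) →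
      (WeakConvTo l (upperFell E) P Q ∧
        (∀ ε : ℝ≥0∞, 0 < ε → ∃ K : Set E, IsCompact K ∧
          1 - ε ≤ l.liminf (fun i => P i {F : Closeds E | (F : Set E) ⊆ K})))) := by
  refine ⟨fun ⟨hPQ, hPK⟩ 𝒻 h𝒻 => limsup_measure_iInter_hitting_le hPQ hPK h𝒻,
    fun ⟨hQK, h⟩ => ⟨weakConvTo_upperFell_of_limsup_iInter_hitting_le h, ?_⟩⟩
  refine isAsymptoticallyCompactBounded_of_limsup_hitting_le hQK fun D hD => ?_
  simpa using h {D} (by simpa using hD)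

/-- under asymptotic compact-boundedness, weak convergence on
`(F, τ_uF)` gives the limsup inequality over intersections of hitting sets of
closed sets; conversely, if the limit is compact-bounded, the inequality
implies weak convergence on `(F, τ_uF)` and asymptotic compact-boundedness. -/
theorem stmt_2 {E : Type*} [TopologicalSpace E] [LocallyCompactSpace E]
    [SecondCountableTopology E] [T2Space E] {ι : Type*} (l : Filter ι) [l.NeBot]
    (P : ι → @Measure (Closeds E) (borelFell E)) (Q : @Measure (Closeds E) (borelFell E))
    (hP : ∀ i, IsProbabilityMeasure (P i)) (hQ : IsProbabilityMeasure Q) :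
    ((WeakConvTo l (upperFell E) P Q ∧
        (∀ ε : ℝ≥0∞, 0 < ε → ∃ K : Set E, IsCompact K ∧
          1 - ε ≤ l.liminf (fun i => P i {F : Closeds E | (F : Set E) ⊆ K}))) →
      ∀ 𝒻 : Set (Set E), (∀ F ∈ 𝒻, IsClosed F) →
        l.limsup (fun i => P i (⋂ F ∈ 𝒻, hitting F)) ≤ Q (⋂ F ∈ 𝒻, hitting F)) ∧
    (((∀ ε : ℝ≥0∞, 0 < ε → ∃ K : Set E, IsCompact K ∧
          1 - ε ≤ Q {F : Closeds E | (F : Set E) ⊆ K}) ∧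
        (∀ 𝒻 : Set (Set E), (∀ F ∈ 𝒻, IsClosed F) →
          l.limsup (fun i => P i (⋂ F ∈ 𝒻, hitting F)) ≤ Q (⋂ F ∈ 𝒻, hitting F))) →
      (WeakConvTo l (upperFell E) P Q ∧
        (∀ ε : ℝ≥0∞, 0 < ε → ∃ K : Set E, IsCompact K ∧
          1 - ε ≤ l.liminf (fun i => P i {F : Closeds E | (F : Set E) ⊆ K})))) :=
  stmt_2_general l P Q hP hQ
end

section
/- Let (C_α) and (D_α) be nets of random closed sets in E (on possibly different probability spaces) with limsup_α P_α(D_α ⊄ C_α) = 0. If C_α converges in distribution to C in (F, τ_uF), then D_α converges in distribution to C in (F, τ_uF). -/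
open TopologicalSpace MeasureTheory Filter Set
open scoped ENNReal

open Topology

/-! Closed sets of the upper Fell topology are upward closed under inclusion, so on the event
`D_α ⊆ C_α` we have `D_α ∈ S → C_α ∈ S`. Hence `P(D_α ∈ S) ≤ P(C_α ∈ S) + P(D_α ⊄ C_α)`, and the
error term has limsup `0`. -/

lemma isLowerSet_missing {E : Type*} [TopologicalSpace E] (A : Set E) :
    IsLowerSet (missing A) := fun _ _ hGF hF =>
  subset_empty_iff.mp (hF ▸ inter_subset_inter_left A hGF)

lemma lowerSet_le_upperFell (E : Type*) [TopologicalSpace E] :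
    Topology.lowerSet (Closeds E) ≤ upperFell E :=
  le_generateFrom fun _ ⟨K, _, hU⟩ => hU ▸ isLowerSet_missing K

lemma isUpperSet_of_isClosed_upperFell {E : Type*} [TopologicalSpace E] {S : Set (Closeds E)}
    (hS : IsClosed[upperFell E] S) : IsUpperSet S :=
  isLowerSet_compl.mp (lowerSet_le_upperFell E _ hS.isOpen_compl)

lemma fell_le_upperFell (E : Type*) [TopologicalSpace E] : fell E ≤ upperFell E :=
  le_generateFrom fun _ hU => isOpen_generateFrom_of_mem (mem_union_left _ hU)

lemma measurableSet_of_isClosed_upperFell {E : Type*} [TopologicalSpace E]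
    {S : Set (Closeds E)} (hS : IsClosed[upperFell E] S) : MeasurableSet[borelFell E] S :=
  (MeasurableSpace.measurableSet_generateFrom
    (fell_le_upperFell E _ hS.isOpen_compl)).of_compl

lemma measure_preimage_le_add_measure_not_le {Ω α : Type*} [MeasurableSpace Ω] [Preorder α]
    (μ : Measure Ω) {S : Set α} (hS : IsUpperSet S) (f g : Ω → α) :
    μ (g ⁻¹' S) ≤ μ (f ⁻¹' S) + μ {ω | ¬ g ω ≤ f ω} := by
  refine (measure_mono fun ω hω => ?_).trans (measure_union_le _ _)
  by_cases hgf : g ω ≤ f ω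
  · exact Or.inl (hS hgf hω)
  · exact Or.inr hgf

lemma limsup_le_of_le_add_of_limsup_eq_zero {ι : Type*} {l : Filter ι} {u v w : ι → ℝ≥0∞}
    (huvw : ∀ i, u i ≤ v i + w i) (hw : l.limsup w = 0) : l.limsup u ≤ l.limsup v :=
  calc l.limsup u ≤ l.limsup (v + w) := limsup_le_limsup (Eventually.of_forall huvw)
    _ = l.limsup v := ENNReal.limsup_add_of_right_tendsto_zero
        (tendsto_of_le_liminf_of_limsup_le bot_le hw.le) v

theorem stmt_8_general {E : Type*} [TopologicalSpace E] {ι : Type*} (l : Filter ι)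
    (Ω : ι → Type*) (mΩ : ∀ i, MeasurableSpace (Ω i))
    (μ : ∀ i, @Measure (Ω i) (mΩ i))
    {Ω₀ : Type*} (mΩ₀ : MeasurableSpace Ω₀) (μ₀ : @Measure Ω₀ mΩ₀)
    (C : ∀ i, Ω i → Closeds E) (D : ∀ i, Ω i → Closeds E) (C₀ : Ω₀ → Closeds E)
    (hC : ∀ i, @Measurable _ _ (mΩ i) (borelFell E) (C i))
    (hD : ∀ i, @Measurable _ _ (mΩ i) (borelFell E) (D i))
    (hsub : l.limsup (fun i => μ i {ω | ¬ (D i ω : Set E) ⊆ (C i ω : Set E)}) = 0)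
    (hconv : WeakConvTo l (upperFell E)
      (fun i => @Measure.map _ _ (mΩ i) (borelFell E) (C i) (μ i))
      (@Measure.map _ _ mΩ₀ (borelFell E) C₀ μ₀)) :
    WeakConvTo l (upperFell E)
      (fun i => @Measure.map _ _ (mΩ i) (borelFell E) (D i) (μ i))
      (@Measure.map _ _ mΩ₀ (borelFell E) C₀ μ₀) := by
  intro S hS
  have hSm := measurableSet_of_isClosed_upperFell hS
  refine (limsup_le_of_le_add_of_limsup_eq_zero (fun i => ?_) hsub).trans (hconv S hS)
  rw [Measure.map_apply (hD i) hSm, Measure.map_apply (hC i) hSm]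
  exact measure_preimage_le_add_measure_not_le (μ i) (isUpperSet_of_isClosed_upperFell hS) _ _

/-- if `limsup_α P_α(D_α ⊄ C_α) = 0` and `C_α →_D C` in
`(F, τ_uF)`, then `D_α →_D C` in `(F, τ_uF)`. -/
theorem stmt_8 {E : Type*} [TopologicalSpace E] [LocallyCompactSpace E]
    [SecondCountableTopology E] [T2Space E] {ι : Type*} (l : Filter ι) [l.NeBot]
    (Ω : ι → Type*) (mΩ : ∀ i, MeasurableSpace (Ω i))
    (μ : ∀ i, @Measure (Ω i) (mΩ i)) (hμ : ∀ i, IsProbabilityMeasure (μ i))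
    {Ω₀ : Type*} (mΩ₀ : MeasurableSpace Ω₀) (μ₀ : @Measure Ω₀ mΩ₀)
    (hμ₀ : IsProbabilityMeasure μ₀)
    (C : ∀ i, Ω i → Closeds E) (D : ∀ i, Ω i → Closeds E) (C₀ : Ω₀ → Closeds E)
    (hC : ∀ i, @Measurable _ _ (mΩ i) (borelFell E) (C i))
    (hD : ∀ i, @Measurable _ _ (mΩ i) (borelFell E) (D i))
    (hC₀ : @Measurable _ _ mΩ₀ (borelFell E) C₀)
    (hsub : l.limsup (fun i => μ i {ω | ¬ (D i ω : Set E) ⊆ (C i ω : Set E)}) = 0)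
    (hconv : WeakConvTo l (upperFell E)
      (fun i => @Measure.map _ _ (mΩ i) (borelFell E) (C i) (μ i))
      (@Measure.map _ _ mΩ₀ (borelFell E) C₀ μ₀)) :
    WeakConvTo l (upperFell E)
      (fun i => @Measure.map _ _ (mΩ i) (borelFell E) (D i) (μ i))
      (@Measure.map _ _ mΩ₀ (borelFell E) C₀ μ₀) :=
  stmt_8_general l Ω mΩ μ mΩ₀ μ₀ C D C₀ hC hD hsub hconv
end

section
/- For an arbitrary subset A of E, the interior of the hitting set H(A) = {F closed : F ∩ A ≠ ∅} in the Fell topology equals H(Int(A)), the hitting set of the interior of A. -/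
/-!
A Fell neighbourhood of a closed set `F` contains a basic one `M(K) ∩ H(G₁) ∩ ⋯ ∩ H(Gₙ)`.
If `F` misses `Int A`, each open set `Gᵢ \ K` meets `F`, so it is not contained in `A`;
picking `yᵢ ∈ (Gᵢ \ K) \ A`, the finite, hence closed, set `{y₁, …, yₙ}` lies in that
neighbourhood but misses `A`. Conversely `H(Int A)` is a subbasic open subset of `H(A)`.
-/

open TopologicalSpace MeasureTheory Filter Set
open scoped ENNReal

section

variable {E : Type*} [TopologicalSpace E]

theorem hitting_mono : Monotone (hitting : Set E → Set (Closeds E)) :=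
  fun _ _ hAB _ hF => hF.mono (inter_subset_inter_right _ hAB)

theorem isOpen_hitting {G : Set E} (hG : IsOpen G) : @IsOpen _ (fell E) (hitting G) :=
  isOpen_generateFrom_of_mem (Or.inr ⟨G, hG, rfl⟩)

def fellBasicNhds (F : Closeds E) : Filter (Closeds E) where
  sets := {U | ∃ K : Set E, IsCompact K ∧ F ∈ missing K ∧
    ∃ 𝒢 : Set (Set E), 𝒢.Finite ∧ (∀ G ∈ 𝒢, IsOpen G ∧ F ∈ hitting G) ∧
      missing K ∩ ⋂ G ∈ 𝒢, hitting G ⊆ U}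
  univ_sets := ⟨∅, isCompact_empty, inter_empty _, ∅, finite_empty, by simp, subset_univ _⟩
  sets_of_superset := fun ⟨K, hK, hFK, 𝒢, h𝒢, hG, hU⟩ hUV =>
    ⟨K, hK, hFK, 𝒢, h𝒢, hG, hU.trans hUV⟩
  inter_sets := by
    rintro U V ⟨K, hK, hFK, 𝒢, h𝒢, hG, hU⟩ ⟨L, hL, hFL, ℋ, hℋ, hH, hV⟩
    refine ⟨K ∪ L, hK.union hL, ?_, 𝒢 ∪ ℋ, h𝒢.union hℋ, ?_, ?_⟩
    · simp_all [missing, inter_union_distrib_left]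
    · rintro G (hG' | hG')
      exacts [hG G hG', hH G hG']
    · intro D ⟨hDKL, hD𝒢ℋ⟩
      simp only [missing, inter_union_distrib_left, union_empty_iff] at hDKL
      simp only [biInter_union, mem_inter_iff] at hD𝒢ℋ
      exact ⟨hU ⟨hDKL.1, hD𝒢ℋ.1⟩, hV ⟨hDKL.2, hD𝒢ℋ.2⟩⟩

theorem fellBasicNhds_le_nhds (F : Closeds E) : fellBasicNhds F ≤ @nhds _ (fell E) F := by
  rw [fell, nhds_generateFrom]
  refine le_iInf₂ fun s ⟨hFs, hs⟩ => le_principal_iff.2 ?_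
  rcases hs with ⟨K, hK, rfl⟩ | ⟨G, hG, rfl⟩
  · exact ⟨K, hK, hFs, ∅, finite_empty, by simp, inter_subset_left⟩
  · exact ⟨∅, isCompact_empty, inter_empty _, {G}, finite_singleton G, by simpa using ⟨hG, hFs⟩,
      by simp⟩

theorem nonempty_diff_of_inter_interior_eq_empty {F A V : Set E} (hV : IsOpen V)
    (hFV : (F ∩ V).Nonempty) (hFA : F ∩ interior A = ∅) : (V \ A).Nonempty := by
  by_contra! hVA
  obtain ⟨x, hxF, hxV⟩ := hFV
  exact hFA.subset ⟨hxF, interior_maximal (sdiff_eq_empty.1 hVA) hV hxV⟩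

theorem exists_mem_missing_of_mem_fellBasicNhds [T2Space E] {A : Set E} {F : Closeds E}
    (hFA : (F : Set E) ∩ interior A = ∅) {U : Set (Closeds E)} (hU : U ∈ fellBasicNhds F) :
    (U ∩ missing A).Nonempty := by
  obtain ⟨K, hK, hFK, 𝒢, h𝒢, hG, hKU⟩ := hU
  have : Finite 𝒢 := h𝒢.to_subtype
  have hpoint (G : 𝒢) : ∃ y ∈ (G : Set E) \ K, y ∉ A := by
    obtain ⟨hGo, hFG⟩ := hG G G.2
    have hFGK : ((F : Set E) ∩ (G \ K)).Nonempty := by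
      obtain ⟨x, hxF, hxG⟩ := hFG
      exact ⟨x, hxF, hxG, fun hxK => (eq_empty_iff_forall_notMem.1 hFK) x ⟨hxF, hxK⟩⟩
    exact nonempty_diff_of_inter_interior_eq_empty (hGo.sdiff hK.isClosed) hFGK hFA
  choose y hyGK hyA using hpoint
  let D : Closeds E := ⟨range y, (finite_range y).isClosed⟩
  refine ⟨D, hKU ⟨?_, ?_⟩, ?_⟩
  · exact eq_empty_iff_forall_notMem.2 fun _ ⟨⟨G, hyG⟩, hyK⟩ => (hyGK G).2 (hyG ▸ hyK)
  · exact mem_iInter₂.2 fun G hG => ⟨y ⟨G, hG⟩, mem_range_self _, (hyGK ⟨G, hG⟩).1⟩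
  · exact eq_empty_iff_forall_notMem.2 fun _ ⟨⟨G, hyG⟩, hyA'⟩ => hyA G (hyG ▸ hyA')

end

theorem stmt_12_general {E : Type*} [TopologicalSpace E] [T2Space E] (A : Set E) :
    @interior (Closeds E) (fell E) (hitting A) = hitting (interior A) := by
  let _ := fell E
  refine Subset.antisymm (fun F hF => ?_)
    (interior_maximal (hitting_mono interior_subset) (isOpen_hitting (E := E) isOpen_interior))
  by_contra hFA
  have hU : hitting A ∈ fellBasicNhds F :=
    fellBasicNhds_le_nhds F (mem_interior_iff_mem_nhds.1 hF)
  obtain ⟨D, hDA, hD⟩ :=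
    exists_mem_missing_of_mem_fellBasicNhds (not_nonempty_iff_eq_empty.1 hFA) hU
  exact hDA.ne_empty hD

/-- for an arbitrary subset `A` of `E`, the Fell-interior of the
hitting set of `A` is the hitting set of the interior of `A`. -/
theorem stmt_12 {E : Type*} [TopologicalSpace E] [LocallyCompactSpace E]
    [SecondCountableTopology E] [T2Space E] (A : Set E) :
    @interior (Closeds E) (fell E) (hitting A) = hitting (interior A) :=
  stmt_12_general A
end
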